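/- There exist constants A > 0 and c₀ > 0 such that for every c ∈ (0, c₀), every normalized exterior slit map f of capacity c, and every w ∈ Δ with |w − 1| ≤ c^{1/2}, one has |f(w) − (1 + d(c))| ≤ A·|w − 1|²/c^{1/2}. -/

import Mathlib

/-- The exterior unit disc `Δ = {z : |z| > 1}`. -/
def ExtDisc : Set ℂ := {z : ℂ | 1 < ‖z‖}

/-- A normalized exterior slit map of capacity `c` (with slit length `d`): a function
holomorphic and injective on `Δ`, with image `Δ` minus the radial slit `(1, 1+d]`,
satisfying `f(z)/z → e^c` as `|z| → ∞`, and continuous on `{|z| ≥ 1}` (we regard `f`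
as its continuous extension to the closed exterior disc). -/
def IsSlitMap (c d : ℝ) (f : ℂ → ℂ) : Prop :=
  ContinuousOn f {z : ℂ | 1 ≤ ‖z‖} ∧
  DifferentiableOn ℂ f ExtDisc ∧
  Set.InjOn f ExtDisc ∧
  f '' ExtDisc = ExtDisc \ {w : ℂ | ∃ x : ℝ, 1 < x ∧ x ≤ 1 + d ∧ w = (x : ℂ)} ∧
  Filter.Tendsto (fun z : ℂ => f z / z) (Filter.comap (fun z : ℂ => ‖z‖) Filter.atTop)
    (nhds ((Real.exp c : ℝ) : ℂ))

/-!
Conjugation by the Joukowski map `J ζ = ζ + ζ⁻¹`, which sends `Δ` biholomorphically onto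
`ℂ \ [-2, 2]` and the slit `(1, 1 + d]` onto `(2, 4 e^c - 2]`, turns the slit map into an affine
map: `J (f z) + 2 = e^c (J z + 2)`. Indeed `h = J⁻¹ ((J ∘ f + 2) / e^c - 2)` is a holomorphic
self-map of `Δ` with `h z / z → 1` at `∞`, hence the identity by the equality case of the Schwarz
lemma.
As `J (1 + d) + 2 = 4 e^c` and `J w - 2 = (w - 1)² / w`, the factorisation
`J a - J b = (a - b) (1 - (a b)⁻¹)` gives `|f w - (1 + d)| d / (1 + d) ≤ e^c |w - 1|²`, and the
relation between `c` and `d` forces `d ≥ 2 √c`.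
-/

open Complex Filter Set Metric Topology Bornology Function

section Joukowski

variable {K : Type*} [Field K]

def joukowski (x : K) : K := x + x⁻¹

lemma joukowski_inv (x : K) : joukowski x⁻¹ = joukowski x := by
  simp [joukowski, add_comm]

lemma joukowski_sub_joukowski {a b : K} (ha : a ≠ 0) (hb : b ≠ 0) :
    joukowski a - joukowski b = (a - b) * (1 - (a * b)⁻¹) := by
  unfold joukowski; field_simp; ring

lemma joukowski_add_two {x : K} (hx : x ≠ 0) : joukowski x + 2 = (x + 1) ^ 2 / x := by
  unfold joukowski; field_simp; ring

lemma joukowski_sub_two {x : K} (hx : x ≠ 0) : joukowski x - 2 = (x - 1) ^ 2 / x := by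
  unfold joukowski; field_simp; ring

end Joukowski

lemma joukowski_strictMonoOn : StrictMonoOn joukowski (Ici (1 : ℝ)) := by
  intro a (ha : 1 ≤ a) b (hb : 1 ≤ b) hab
  have hab1 : 1 < b * a := by nlinarith
  have hfac := joukowski_sub_joukowski (by positivity : b ≠ 0) (by positivity : a ≠ 0)
  have hpos : 0 < (b - a) * (1 - (b * a)⁻¹) :=
    mul_pos (sub_pos.2 hab) (sub_pos.2 (inv_lt_one_of_one_lt₀ hab1))
  linarith

lemma joukowski_lt_neg_two {x : ℝ} (hx : x < -1) : joukowski x < -2 := by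
  have : (x + 1) ^ 2 / x < 0 := div_neg_of_pos_of_neg (by nlinarith) (by linarith)
  linarith [joukowski_add_two (by linarith : x ≠ 0)]

@[simp, norm_cast]
lemma Complex.ofReal_joukowski (x : ℝ) : ((joukowski x : ℝ) : ℂ) = joukowski (x : ℂ) := by
  simp [joukowski]

lemma Complex.im_joukowski (ζ : ℂ) : (joukowski ζ).im = ζ.im * (1 - (normSq ζ)⁻¹) := by
  simp [joukowski, inv_im]; ring

lemma isOpen_extDisc : IsOpen ExtDisc := isOpen_lt continuous_const continuous_norm

lemma ne_zero_of_mem_extDisc {z : ℂ} (hz : z ∈ ExtDisc) : z ≠ 0 := by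
  rintro rfl; simp [ExtDisc] at hz; linarith

lemma joukowski_injOn : InjOn joukowski ExtDisc := by
  intro a (ha : 1 < ‖a‖) b (hb : 1 < ‖b‖) hab
  have hne : (a * b)⁻¹ ≠ 1 := by
    intro h
    have : ‖a * b‖ = 1 := by rw [inv_eq_one.1 h, norm_one]
    rw [norm_mul] at this; nlinarith
  have := joukowski_sub_joukowski (ne_zero_of_mem_extDisc ha) (ne_zero_of_mem_extDisc hb)
  rw [hab, sub_self, eq_comm, mul_eq_zero, sub_eq_zero, sub_eq_zero] at this
  exact this.resolve_right (Ne.symm hne)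

lemma exists_ofReal_of_joukowski_mem_Icc {ζ : ℂ} {t D : ℝ} (hζ : ζ ∈ ExtDisc) (hD : 1 ≤ D)
    (h : joukowski ζ = t) (ht : t ∈ Icc (-2) (joukowski D)) :
    ∃ x : ℝ, 1 < x ∧ x ≤ D ∧ ζ = x := by
  have hζ' : 1 < ‖ζ‖ := hζ
  have him : ζ.im = 0 := by
    have h1 := im_joukowski ζ
    rw [h, ofReal_im, eq_comm, mul_eq_zero] at h1
    refine h1.resolve_right (sub_ne_zero.2 (Ne.symm (inv_lt_one_of_one_lt₀ ?_).ne))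
    rw [normSq_eq_norm_sq]; nlinarith
  set x := ζ.re
  have hζx : ζ = x := Complex.ext rfl (by simpa using him)
  have hx : 1 < |x| := by rwa [hζx, norm_real, Real.norm_eq_abs] at hζ'
  have hJx : joukowski x = t := by exact_mod_cast hζx ▸ h
  have hx1 : 1 < x := by
    rcases lt_abs.1 hx with hx | hx
    · exact hx
    · linarith [joukowski_lt_neg_two (by linarith : x < -1), ht.1]
  refine ⟨x, hx1, ?_, hζx⟩
  exact (joukowski_strictMonoOn.le_iff_le hx1.le hD).1 (hJx ▸ ht.2)

lemma mem_joukowski_image_extDisc {u : ℂ} (hu : u ∉ ((↑) : ℝ → ℂ) '' Icc (-2) 2) :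
    u ∈ joukowski '' ExtDisc := by
  obtain ⟨r, hr⟩ := IsAlgClosed.exists_pow_nat_eq (u ^ 2 - 4) two_pos
  -- `p` is a root of `ζ ^ 2 - u ζ + 1`, and so is `p⁻¹ = u - p`
  set p := (u + r) / 2
  have hp : p * (u - p) = 1 := by linear_combination -hr / 4
  have hp0 : p ≠ 0 := left_ne_zero_of_mul_eq_one hp
  have hJp : joukowski p = u := by
    rw [joukowski, inv_eq_of_mul_eq_one_right hp]; ring
  rcases lt_trichotomy ‖p‖ 1 with h | h | h
  · refine ⟨p⁻¹, ?_, by rw [joukowski_inv, hJp]⟩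
    simpa [ExtDisc, norm_inv] using one_lt_inv₀ (norm_pos_iff.2 hp0) |>.2 h
  · refine absurd ⟨2 * p.re, ?_, ?_⟩ hu
    · have := abs_le.1 ((abs_re_le_norm p).trans h.le)
      constructor <;> linarith
    · rw [← hJp, joukowski, inv_eq_conj h, add_conj]
  · exact ⟨p, h, hJp⟩

noncomputable def joukowskiInv : ℂ → ℂ := invFunOn joukowski ExtDisc

lemma joukowskiInv_mem {u : ℂ} (hu : u ∈ joukowski '' ExtDisc) : joukowskiInv u ∈ ExtDisc :=
  invFunOn_mem hu

lemma joukowski_joukowskiInv {u : ℂ} (hu : u ∈ joukowski '' ExtDisc) :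
    joukowski (joukowskiInv u) = u :=
  invFunOn_eq hu

lemma hasStrictDerivAt_joukowski {ζ : ℂ} (hζ : ζ ≠ 0) :
    HasStrictDerivAt joukowski (1 - (ζ ^ 2)⁻¹) ζ := by
  rw [sub_eq_add_neg]
  exact (hasStrictDerivAt_id ζ).add (hasStrictDerivAt_inv hζ)

lemma hasStrictDerivAt_joukowskiInv {ζ : ℂ} (hζ : ζ ∈ ExtDisc) :
    HasStrictDerivAt joukowskiInv (1 - (ζ ^ 2)⁻¹)⁻¹ (joukowski ζ) := by
  have hder : 1 - (ζ ^ 2)⁻¹ ≠ 0 := by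
    rw [sub_ne_zero, ne_comm, inv_ne_one]
    intro h
    have : ‖ζ‖ ^ 2 = 1 := by rw [← norm_pow, h, norm_one]
    have hζ' : 1 < ‖ζ‖ := hζ
    nlinarith
  refine (hasStrictDerivAt_joukowski (ne_zero_of_mem_extDisc hζ)).to_local_left_inverse hder ?_
  filter_upwards [isOpen_extDisc.eventually_mem hζ] with x hx
  exact joukowski_injOn.leftInvOn_invFunOn hx

lemma inv_mem_extDisc {ζ : ℂ} (hζ : ζ ∈ ball (0 : ℂ) 1) (hζ0 : ζ ≠ 0) : ζ⁻¹ ∈ ExtDisc := by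
  rw [mem_ball_zero_iff] at hζ
  simpa [ExtDisc, norm_inv] using (one_lt_inv₀ (norm_pos_iff.2 hζ0)).2 hζ

lemma inv_mem_ball {z : ℂ} (hz : z ∈ ExtDisc) : z⁻¹ ∈ ball (0 : ℂ) 1 := by
  have hz' : 1 < ‖z‖ := hz
  simpa [norm_inv] using inv_lt_one_of_one_lt₀ hz'

/-- Exterior form of the equality case of the Schwarz lemma: `ζ ↦ (h ζ⁻¹)⁻¹` is a self-map of
the unit disc fixing `0` with derivative `1` there. -/
theorem eqOn_id_of_mapsTo_extDisc {h : ℂ → ℂ} (hd : DifferentiableOn ℂ h ExtDisc)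
    (hmaps : MapsTo h ExtDisc ExtDisc) (hlim : Tendsto (fun z => h z / z) (cobounded ℂ) (𝓝 1)) :
    EqOn h id ExtDisc := by
  set k : ℂ → ℂ := update (fun ζ => (h ζ⁻¹)⁻¹) 0 0
  have hk0 : k 0 = 0 := update_self ..
  have hk : ∀ ζ ≠ 0, k ζ = (h ζ⁻¹)⁻¹ := fun ζ hζ => update_of_ne hζ _ _
  have hderiv : HasDerivAt k 1 0 := by
    rw [hasDerivAt_iff_tendsto_slope]
    have := (hlim.comp tendsto_inv₀_nhdsNE_zero).inv₀ one_ne_zero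
    rw [inv_one] at this
    refine this.congr' ?_
    filter_upwards [self_mem_nhdsWithin] with ζ (hζ : ζ ≠ 0)
    simp [slope_def_field, hk ζ hζ, hk0, div_eq_mul_inv, mul_comm]
  have hdiff : DifferentiableOn ℂ k (ball 0 1) := by
    intro ζ hζ
    rcases eq_or_ne ζ 0 with rfl | hζ0
    · exact hderiv.differentiableAt.differentiableWithinAt
    have hmem := inv_mem_extDisc hζ hζ0
    have : DifferentiableAt ℂ (fun ζ => (h ζ⁻¹)⁻¹) ζ :=
      ((hd.differentiableAt (isOpen_extDisc.mem_nhds hmem)).comp ζ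
        (differentiableAt_inv hζ0)).inv (ne_zero_of_mem_extDisc (hmaps hmem))
    refine (this.congr_of_eventuallyEq ?_).differentiableWithinAt
    filter_upwards [eventually_ne_nhds hζ0] with w hw using hk w hw
  have hmapsk : MapsTo k (ball 0 1) (closedBall (k 0) 1) := by
    intro ζ hζ
    rcases eq_or_ne ζ 0 with rfl | hζ0
    · exact mem_closedBall_self zero_le_one
    rw [hk ζ hζ0, hk0, mem_closedBall_zero_iff, norm_inv]
    exact inv_le_one_of_one_le₀ (hmaps (inv_mem_extDisc hζ hζ0)).le
  have hslope : dslope k 0 0 = 1 := by rw [dslope_same, hderiv.deriv]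
  have hlin := Complex.affine_of_mapsTo_ball_of_norm_dslope_eq_div hdiff hmapsk
    (mem_ball_self one_pos) (by rw [hslope, norm_one, div_one])
  intro z hz
  have := hlin (inv_mem_ball hz)
  rw [hk _ (inv_ne_zero (ne_zero_of_mem_extDisc hz)), hslope, hk0, inv_inv] at this
  simpa using this

lemma extDisc_mem_cobounded : ExtDisc ∈ cobounded ℂ :=
  tendsto_norm_cobounded_atTop.eventually_gt_atTop 1

lemma tendsto_inv_mul_self_cobounded {g : ℂ → ℂ} (hg : MapsTo g ExtDisc ExtDisc) :
    Tendsto (fun z => (g z * z)⁻¹) (cobounded ℂ) (𝓝 0) := by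
  refine squeeze_zero_norm' ?_ (tendsto_norm_zero.comp tendsto_inv₀_cobounded)
  filter_upwards [extDisc_mem_cobounded] with z hz
  rw [mul_inv, norm_mul, comp_apply, norm_inv (g z)]
  exact mul_le_of_le_one_left (norm_nonneg _) (inv_le_one_of_one_le₀ (hg hz).le)

lemma tendsto_joukowski_comp_div_self_iff {g : ℂ → ℂ} (hg : MapsTo g ExtDisc ExtDisc) {a : ℂ} :
    Tendsto (fun z => joukowski (g z) / z) (cobounded ℂ) (𝓝 a) ↔
      Tendsto (fun z => g z / z) (cobounded ℂ) (𝓝 a) := by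
  have heq : ∀ z, joukowski (g z) / z = g z / z + (g z * z)⁻¹ := fun z => by
    rw [joukowski, add_div, mul_inv, div_eq_mul_inv (g z)⁻¹]
  simp only [heq]
  constructor
  · intro h
    simpa using h.sub (tendsto_inv_mul_self_cobounded hg)
  · intro h
    simpa using h.add (tendsto_inv_mul_self_cobounded hg)

lemma norm_sub_mul_le_norm_joukowski_sub {W D : ℂ} (hW : 1 ≤ ‖W‖) (hD : D ≠ 0) :
    ‖W - D‖ * (1 - ‖D‖⁻¹) ≤ ‖joukowski W - joukowski D‖ := by
  rw [joukowski_sub_joukowski (norm_pos_iff.1 (by linarith)) hD, norm_mul]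
  gcongr
  calc 1 - ‖D‖⁻¹ ≤ ‖(1 : ℂ)‖ - ‖(W * D)⁻¹‖ := by
        rw [norm_one, norm_inv, norm_mul, mul_inv]
        gcongr
        exact mul_le_of_le_one_left (by positivity) (inv_le_one_of_one_le₀ hW)
    _ ≤ ‖1 - (W * D)⁻¹‖ := norm_sub_norm_le _ _

namespace IsSlitMap

variable {c d : ℝ} {f : ℂ → ℂ}

lemma mapsTo (hf : IsSlitMap c d f) :
    MapsTo f ExtDisc (ExtDisc \ {w : ℂ | ∃ x : ℝ, 1 < x ∧ x ≤ 1 + d ∧ w = (x : ℂ)}) :=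
  hf.2.2.2.1 ▸ mapsTo_image f ExtDisc

lemma mapsTo_extDisc (hf : IsSlitMap c d f) : MapsTo f ExtDisc ExtDisc :=
  fun _ hz => (hf.mapsTo hz).1

lemma joukowski_normalize_mem_image (hf : IsSlitMap c d f) (hd : 0 ≤ d)
    (htip : joukowski (1 + d) + 2 = 4 * Real.exp c) {z : ℂ} (hz : z ∈ ExtDisc) :
    (joukowski (f z) + 2) / Real.exp c - 2 ∈ joukowski '' ExtDisc := by
  apply mem_joukowski_image_extDisc
  rintro ⟨x, hx, hvx⟩
  obtain ⟨hfz, hslit⟩ := hf.mapsTo hz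
  have hJ : joukowski (f z) = ↑(Real.exp c * (x + 2) - 2) := by
    rw [eq_sub_iff_add_eq, eq_div_iff (by exact_mod_cast (Real.exp_pos c).ne')] at hvx
    simp only [ofReal_sub, ofReal_mul, ofReal_add, ofReal_ofNat]
    linear_combination -hvx
  refine hslit (exists_ofReal_of_joukowski_mem_Icc hfz (by linarith) hJ ⟨?_, ?_⟩)
  · nlinarith [Real.exp_pos c, hx.1]
  · nlinarith [Real.exp_pos c, hx.2]

theorem joukowski_add_two_eq (hf : IsSlitMap c d f) (hd : 0 ≤ d)
    (htip : joukowski (1 + d) + 2 = 4 * Real.exp c) {z : ℂ} (hz : z ∈ ExtDisc) :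
    joukowski (f z) + 2 = Real.exp c * (joukowski z + 2) := by
  have hE : (Real.exp c : ℂ) ≠ 0 := by exact_mod_cast (Real.exp_pos c).ne'
  set v : ℂ → ℂ := fun z => (joukowski (f z) + 2) / Real.exp c - 2
  have hv : ∀ z ∈ ExtDisc, v z ∈ joukowski '' ExtDisc := fun z hz =>
    hf.joukowski_normalize_mem_image hd htip hz
  have hmaps : MapsTo (joukowskiInv ∘ v) ExtDisc ExtDisc := fun z hz => joukowskiInv_mem (hv z hz)
  have hdiff : DifferentiableOn ℂ (joukowskiInv ∘ v) ExtDisc := by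
    intro z hz
    obtain ⟨ζ, hζ, hζv⟩ := hv z hz
    have hfz := hf.2.1.differentiableAt (isOpen_extDisc.mem_nhds hz)
    have hvd : DifferentiableAt ℂ v z :=
      (((hfz.add (hfz.inv (ne_zero_of_mem_extDisc (hf.mapsTo_extDisc hz)))).add_const 2).div_const
        _).sub_const 2
    have hinv := (hasStrictDerivAt_joukowskiInv hζ).hasDerivAt.differentiableAt
    rw [hζv] at hinv
    exact (hinv.comp z hvd).differentiableWithinAt
  have hlim : Tendsto (fun z => (joukowskiInv ∘ v) z / z) (cobounded ℂ) (𝓝 1) := by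
    rw [← tendsto_joukowski_comp_div_self_iff hmaps]
    have hf_lim : Tendsto (fun z => joukowski (f z) / z) (cobounded ℂ) (𝓝 (Real.exp c)) := by
      rw [tendsto_joukowski_comp_div_self_iff hf.mapsTo_extDisc, ← comap_norm_atTop]
      exact hf.2.2.2.2
    have hinv := tendsto_inv₀_cobounded (α := ℂ)
    have := ((hf_lim.add (hinv.const_mul 2)).div_const (Real.exp c : ℂ)).sub (hinv.const_mul 2)
    rw [mul_zero, add_zero, sub_zero, div_self hE] at this
    refine this.congr' ?_
    filter_upwards [extDisc_mem_cobounded] with z hz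
    rw [comp_apply, joukowski_joukowskiInv (hv z hz)]
    simp only [v]
    field_simp
  have hJz : joukowski ((joukowskiInv ∘ v) z) = v z := joukowski_joukowskiInv (hv z hz)
  rw [eqOn_id_of_mapsTo_extDisc hdiff hmaps hlim hz, id] at hJz
  rw [hJz, sub_add_cancel, mul_div_cancel₀ _ hE]

lemma norm_sub_tip_mul_le (hf : IsSlitMap c d f) (hd : 0 < d)
    (htip : joukowski (1 + d) + 2 = 4 * Real.exp c) {w : ℂ} (hw : w ∈ ExtDisc) :
    ‖f w - (1 + d)‖ * d ≤ Real.exp c * (1 + d) * ‖w - 1‖ ^ 2 := by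
  have hw0 := ne_zero_of_mem_extDisc hw
  have hJ : joukowski (f w) - joukowski ((1 + d : ℝ) : ℂ) = Real.exp c * ((w - 1) ^ 2 / w) := by
    rw [← joukowski_sub_two hw0, ← ofReal_joukowski, eq_sub_of_add_eq htip]
    simp only [ofReal_sub, ofReal_mul, ofReal_ofNat]
    linear_combination hf.joukowski_add_two_eq hd.le htip hw
  have hest := norm_sub_mul_le_norm_joukowski_sub (hf.mapsTo_extDisc hw).le
    (ofReal_ne_zero.2 (by positivity : 1 + d ≠ 0))
  rw [hJ, norm_mul, norm_div, norm_pow, norm_real, norm_real, Real.norm_of_nonneg (by positivity),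
    Real.norm_of_nonneg (by positivity), ofReal_add, ofReal_one] at hest
  have hdiv : ‖w - 1‖ ^ 2 / ‖w‖ ≤ ‖w - 1‖ ^ 2 := div_le_self (by positivity) (le_of_lt hw)
  have hfrac : 1 - (1 + d)⁻¹ = d / (1 + d) := by field_simp; ring
  rw [hfrac, mul_div_assoc', div_le_iff₀ (by positivity)] at hest
  calc ‖f w - (1 + d)‖ * d ≤ Real.exp c * (‖w - 1‖ ^ 2 / ‖w‖) * (1 + d) := hest
    _ ≤ Real.exp c * ‖w - 1‖ ^ 2 * (1 + d) := by gcongr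
    _ = Real.exp c * (1 + d) * ‖w - 1‖ ^ 2 := by ring

end IsSlitMap

lemma two_sqrt_le_of_slit_rel {c d : ℝ} (hc : 0 ≤ c) (hd : 0 < d)
    (hrel : (d + 2) ^ 2 / (d + 1) = 4 * Real.exp c) : 2 * √c ≤ d := by
  rw [div_eq_iff (by positivity)] at hrel
  have hd2 : 4 * c ≤ d ^ 2 := by nlinarith [Real.add_one_le_exp c]
  nlinarith [Real.sq_sqrt hc, Real.sqrt_nonneg c]

/-- Near the preimage of the slit tip, the slit map is close to the tip `1 + d(c)`:
`f(w) = 1 + d(c) + O(|w−1|²/c^{1/2})` for `|w − 1| ≤ c^{1/2}`. -/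
theorem slit_map_value_near_tip :
    ∃ A c₀ : ℝ, 0 < A ∧ 0 < c₀ ∧
      ∀ c d : ℝ, ∀ f : ℂ → ℂ,
        0 < c → c < c₀ →
        0 < d → (d + 2) ^ 2 / (d + 1) = 4 * Real.exp c →
        IsSlitMap c d f →
        ∀ w ∈ ExtDisc,
          ‖w - 1‖ ≤ Real.sqrt c →
          ‖f w - (1 + (d : ℂ))‖ ≤ A * ‖w - 1‖ ^ 2 / Real.sqrt c := by
  refine ⟨5, 1, by norm_num, one_pos, ?_⟩
  intro c d f hc hc1 hd hrel hf w hw _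
  have htip : joukowski (1 + d) + 2 = 4 * Real.exp c := by
    rw [joukowski_add_two (by positivity), ← hrel]; ring_nf
  have hmain := hf.norm_sub_tip_mul_le hd htip hw
  have hE : Real.exp c ≤ 3 :=
    (Real.exp_le_exp.2 hc1.le).trans (Real.exp_one_lt_d9.le.trans (by norm_num))
  have hsd := two_sqrt_le_of_slit_rel hc.le hd hrel
  have hs1 : √c ≤ 1 := Real.sqrt_le_one.2 hc1.le
  rw [le_div_iff₀ (Real.sqrt_pos.2 hc)]
  refine le_of_mul_le_mul_right ?_ hd
  calc ‖f w - (1 + d)‖ * √c * d = ‖f w - (1 + d)‖ * d * √c := by ring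
    _ ≤ 3 * (1 + d) * ‖w - 1‖ ^ 2 * √c :=
        mul_le_mul_of_nonneg_right (hmain.trans (by gcongr)) (Real.sqrt_nonneg c)
    _ = 3 * ‖w - 1‖ ^ 2 * √c + 3 * ‖w - 1‖ ^ 2 * d * √c := by ring
    _ ≤ 3 * ‖w - 1‖ ^ 2 * (d / 2) + 3 * ‖w - 1‖ ^ 2 * d * 1 := by gcongr; linarith
    _ ≤ 5 * ‖w - 1‖ ^ 2 * d := by nlinarith [sq_nonneg ‖w - 1‖]
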